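/- Let g be a Lie algebra, t ∈ g⊗g symmetric and g-invariant, and let t^∨ : g* → g be the associated linear map. For λ ∈ g*, define t_n(λ) = (ad(t^∨(λ)) applied in the second tensor factor)^{2n-1}(t). Then t_n(λ) lies in the antisymmetric part ∧²(g) of g⊗g; more generally, (1⊗ad t^∨(λ))^k(t) lies in S²(g) if k is even and in ∧²(g) if k is odd. -/

import Mathlib

/-! Invariance of `t` under `x` says `(ad x ⊗ 1) t = -(1 ⊗ ad x) t`. Since `ad x ⊗ 1` commutes with
`1 ⊗ ad x`, it acts as `-(1 ⊗ ad x)` on every `(1 ⊗ ad x)^k t`. As the flip conjugates `1 ⊗ ad x`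
into `ad x ⊗ 1`, each application of `1 ⊗ ad x` to the symmetric tensor `t` changes the sign of
the flip. -/

open TensorProduct

variable (g : Type*) [LieRing g] [LieAlgebra ℂ g]

/-- `t^∨(λ) = (λ ⊗ id)(t)`. -/
noncomputable def tvee (t : g ⊗[ℂ] g) (lam : Module.Dual ℂ g) : g :=
  TensorProduct.lid ℂ g (TensorProduct.map lam LinearMap.id t)

/-- the operator `1 ⊗ ad x` on `g ⊗ g`. -/
noncomputable def oneAd (x : g) : g ⊗[ℂ] g →ₗ[ℂ] g ⊗[ℂ] g :=
  LinearMap.lTensor g ((LieAlgebra.ad ℂ g x : Module.End ℂ g) : g →ₗ[ℂ] g)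

namespace TensorProduct

variable {R M : Type*} [CommRing R] [AddCommGroup M] [Module R M]

theorem rTensor_iterate_lTensor_of_rTensor_eq_neg {f : M →ₗ[R] M} {t : M ⊗[R] M}
    (hanti : f.rTensor M t = -f.lTensor M t) (k : ℕ) :
    f.rTensor M ((f.lTensor M)^[k] t) = -(f.lTensor M)^[k + 1] t := by
  have hcomm : Function.Commute (f.rTensor M) (f.lTensor M) := fun z => by
    rw [← LinearMap.comp_apply, LinearMap.rTensor_comp_lTensor, ← LinearMap.comp_apply,
      LinearMap.lTensor_comp_rTensor]
  rw [(hcomm.iterate_right k).eq, hanti, iterate_map_neg, Function.iterate_succ_apply]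

theorem comm_iterate_lTensor_of_rTensor_eq_neg {f : M →ₗ[R] M} {t : M ⊗[R] M}
    (hsym : TensorProduct.comm R M M t = t) (hanti : f.rTensor M t = -f.lTensor M t) (k : ℕ) :
    TensorProduct.comm R M M ((f.lTensor M)^[k] t) = (-1 : R) ^ k • (f.lTensor M)^[k] t := by
  induction k with
  | zero => simpa using hsym
  | succ k ih =>
    rw [Function.iterate_succ_apply', ← LinearMap.rTensor_comm, ih, map_smul,
      rTensor_iterate_lTensor_of_rTensor_eq_neg hanti, pow_succ, mul_neg_one, neg_smul, smul_neg,
      Function.iterate_succ_apply']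

end TensorProduct

theorem stmt_2 (t : g ⊗[ℂ] g)
    (hsym : TensorProduct.comm ℂ g g t = t)
    (hinv : ∀ x : g,
      LinearMap.rTensor g ((LieAlgebra.ad ℂ g x : Module.End ℂ g) : g →ₗ[ℂ] g) t
        + LinearMap.lTensor g ((LieAlgebra.ad ℂ g x : Module.End ℂ g) : g →ₗ[ℂ] g) t = 0) :
    ∀ (lam : Module.Dual ℂ g) (k : ℕ),
      (Even k → TensorProduct.comm ℂ g g ((oneAd g (tvee g t lam))^[k] t)
            = (oneAd g (tvee g t lam))^[k] t) ∧
      (Odd k → TensorProduct.comm ℂ g g ((oneAd g (tvee g t lam))^[k] t)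
            = -((oneAd g (tvee g t lam))^[k] t)) ∧
      (∀ n : ℕ, 1 ≤ n →
        TensorProduct.comm ℂ g g ((oneAd g (tvee g t lam))^[2 * n - 1] t)
          = -((oneAd g (tvee g t lam))^[2 * n - 1] t)) := by
  intro lam k
  have hflip (j : ℕ) := comm_iterate_lTensor_of_rTensor_eq_neg hsym
    (eq_neg_of_add_eq_zero_left (hinv (tvee g t lam))) j
  refine ⟨fun hk => ?_, fun hk => ?_, fun n hn => ?_⟩
  · rw [oneAd, hflip, hk.neg_one_pow, one_smul]
  · rw [oneAd, hflip, hk.neg_one_pow, neg_one_smul]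
  · have hodd : Odd (2 * n - 1) := ⟨n - 1, by omega⟩
    rw [oneAd, hflip, hodd.neg_one_pow, neg_one_smul]
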